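/- arXiv:2207.13926 — 2 statements merged into one kernel-verified Lean document; each statement's English description precedes it below -/
import Mathlib

section
/- Let W be an n×n max-plus matrix. The pair (ε_W, δ_W) is an adjunction on [a,b]^n (i.e., both map L to L and δ_W(x) ≤ y ⟺ x ≤ ε_W(y) for all x,y ∈ L) if and only if W is doubly-0-astic (every row supremum and every column supremum equals 0). -/
/-!
Both maps are monotone, and on a constant vector `c` they act through the row and column
suprema: `δ_W(c)_i = (⨆ j, w_ij) + c` and `ε_W(c)_j = c - ⨆ i, w_ij`. Testing the constant
vectors `a` and `b` therefore forces every row and column supremum to be `0`, and conversely,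
when they are `0`, monotonicity squeezes `δ_W(x)` and `ε_W(y)` between the constants `a` and
`b`. The adjunction itself holds for every `W`, since `w_ij + x_j ≤ y_i ↔ x_j ≤ y_i - w_ij`
in `EReal`.
-/

noncomputable def deltaE {n : ℕ} (W : Fin n → Fin n → EReal) (x : Fin n → ℝ) (i : Fin n) : EReal :=
  ⨆ j, W i j + (x j : EReal)

noncomputable def epsE {n : ℕ} (W : Fin n → Fin n → EReal) (y : Fin n → ℝ) (i : Fin n) : EReal :=
  ⨅ j, (y j : EReal) - W j i

def RowAstic {n : ℕ} (W : Fin n → Fin n → EReal) : Prop := ∀ i, (⨆ j, W i j) = 0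

def ColAstic {n : ℕ} (W : Fin n → Fin n → EReal) : Prop := ∀ j, (⨆ i, W i j) = 0

def DoublyAstic {n : ℕ} (W : Fin n → Fin n → EReal) : Prop := RowAstic W ∧ ColAstic W

namespace EReal

theorem le_sub_coe_iff_add_coe_le {a c : EReal} {r : ℝ} : a ≤ c - r ↔ a + r ≤ c :=
  le_sub_iff_add_le (.inl (coe_ne_bot r)) (.inl (coe_ne_top r))

theorem le_coe_sub_iff_add_le {a b : EReal} {r : ℝ} : a ≤ r - b ↔ a + b ≤ r :=
  le_sub_iff_add_le (.inr (coe_ne_bot r)) (.inr (coe_ne_top r))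

theorem le_coe_sub_comm {a b : EReal} {r : ℝ} : a ≤ r - b ↔ b ≤ r - a := by
  rw [le_coe_sub_iff_add_le, le_coe_sub_iff_add_le, add_comm]

theorem add_coe_le_coe_iff {a : EReal} {r : ℝ} : a + r ≤ r ↔ a ≤ 0 := by
  simpa using (addLECancellable_coe r).add_le_add_iff_right (b := a) (c := 0)

theorem coe_le_add_coe_iff {a : EReal} {r : ℝ} : (r : EReal) ≤ a + r ↔ 0 ≤ a := by
  simpa using (addLECancellable_coe r).add_le_add_iff_right (b := 0) (c := a)

theorem coe_sub_le_coe_iff {a : EReal} {r : ℝ} : (r : EReal) - a ≤ r ↔ 0 ≤ a := by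
  rw [sub_le_iff_le_add (.inr (coe_ne_top r)) (.inr (coe_ne_bot r)), add_comm, coe_le_add_coe_iff]

theorem coe_le_coe_sub_iff {a : EReal} {r : ℝ} : (r : EReal) ≤ r - a ↔ a ≤ 0 := by
  rw [le_coe_sub_comm, ← coe_sub, _root_.sub_self, coe_zero]

theorem iSup_add_coe {ι : Sort*} (f : ι → EReal) (r : ℝ) :
    ⨆ j, f j + r = (⨆ j, f j) + r :=
  eq_of_forall_ge_iff fun t => by simp only [iSup_le_iff, ← le_sub_coe_iff_add_coe_le]

theorem iInf_coe_sub {ι : Sort*} (f : ι → EReal) (r : ℝ) :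
    ⨅ j, (r : EReal) - f j = r - ⨆ j, f j :=
  eq_of_forall_le_iff fun t => by
    simp only [le_iInf_iff, le_coe_sub_comm (a := t), iSup_le_iff]

end EReal

section MaxPlus

variable {n : ℕ} (W : Fin n → Fin n → EReal)

theorem deltaE_mono {x x' : Fin n → ℝ} (h : x ≤ x') (i : Fin n) :
    deltaE W x i ≤ deltaE W x' i :=
  iSup_mono fun j => add_le_add_right (EReal.coe_le_coe_iff.2 (h j)) _

theorem epsE_mono {y y' : Fin n → ℝ} (h : y ≤ y') (j : Fin n) : epsE W y j ≤ epsE W y' j :=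
  iInf_mono fun i => EReal.sub_le_sub (EReal.coe_le_coe_iff.2 (h i)) le_rfl

theorem deltaE_const (c : ℝ) (i : Fin n) : deltaE W (fun _ => c) i = (⨆ j, W i j) + c :=
  EReal.iSup_add_coe _ c

theorem epsE_const (c : ℝ) (j : Fin n) : epsE W (fun _ => c) j = c - ⨆ i, W i j :=
  EReal.iInf_coe_sub _ c

theorem deltaE_le_iff_le_epsE (x y : Fin n → ℝ) :
    (∀ i, deltaE W x i ≤ (y i : EReal)) ↔ ∀ j, (x j : EReal) ≤ epsE W y j := by
  simp only [deltaE, epsE, iSup_le_iff, le_iInf_iff, EReal.le_coe_sub_iff_add_le,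
    add_comm (x _ : EReal)]
  exact forall_comm

theorem forall_deltaE_mem_Icc_iff {a b : ℝ} (hab : a ≤ b) :
    (∀ x : Fin n → ℝ, (∀ i, x i ∈ Set.Icc a b) →
      ∀ i, deltaE W x i ∈ Set.Icc (a : EReal) (b : EReal)) ↔ RowAstic W := by
  constructor
  · intro h i
    have hlow := (h (fun _ => a) (fun _ => ⟨le_rfl, hab⟩) i).1
    have hupp := (h (fun _ => b) (fun _ => ⟨hab, le_rfl⟩) i).2
    rw [deltaE_const] at hlow hupp
    exact le_antisymm (EReal.add_coe_le_coe_iff.1 hupp) (EReal.coe_le_add_coe_iff.1 hlow)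
  · intro hW x hx i
    have hconst (c : ℝ) : deltaE W (fun _ => c) i = c := by rw [deltaE_const, hW i, zero_add]
    exact ⟨hconst a ▸ deltaE_mono W (fun j => (hx j).1) i,
      hconst b ▸ deltaE_mono W (fun j => (hx j).2) i⟩

theorem forall_epsE_mem_Icc_iff {a b : ℝ} (hab : a ≤ b) :
    (∀ y : Fin n → ℝ, (∀ i, y i ∈ Set.Icc a b) →
      ∀ i, epsE W y i ∈ Set.Icc (a : EReal) (b : EReal)) ↔ ColAstic W := by
  constructor
  · intro h j
    have hlow := (h (fun _ => a) (fun _ => ⟨le_rfl, hab⟩) j).1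
    have hupp := (h (fun _ => b) (fun _ => ⟨hab, le_rfl⟩) j).2
    rw [epsE_const] at hlow hupp
    exact le_antisymm (EReal.coe_le_coe_sub_iff.1 hlow) (EReal.coe_sub_le_coe_iff.1 hupp)
  · intro hW y hy j
    have hconst (c : ℝ) : epsE W (fun _ => c) j = c := by rw [epsE_const, hW j, sub_zero]
    exact ⟨hconst a ▸ epsE_mono W (fun i => (hy i).1) j,
      hconst b ▸ epsE_mono W (fun i => (hy i).2) j⟩

end MaxPlus

theorem stmt4_general (n : ℕ) (a b : ℝ) (hab : a < b)
    (W : Fin n → Fin n → EReal) :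
    ((∀ x : Fin n → ℝ, (∀ i, x i ∈ Set.Icc a b) →
        ∀ i, deltaE W x i ∈ Set.Icc (a : EReal) (b : EReal)) ∧
      (∀ y : Fin n → ℝ, (∀ i, y i ∈ Set.Icc a b) →
        ∀ i, epsE W y i ∈ Set.Icc (a : EReal) (b : EReal)) ∧
      (∀ x y : Fin n → ℝ, (∀ i, x i ∈ Set.Icc a b) → (∀ i, y i ∈ Set.Icc a b) →
        ((∀ i, deltaE W x i ≤ (y i : EReal)) ↔ (∀ i, (x i : EReal) ≤ epsE W y i))))
    ↔ DoublyAstic W := by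
  rw [forall_deltaE_mem_Icc_iff W hab.le, forall_epsE_mem_Icc_iff W hab.le]
  exact ⟨fun h => ⟨h.1, h.2.1⟩,
    fun h => ⟨h.1, h.2, fun x y _ _ => deltaE_le_iff_le_epsE W x y⟩⟩

/-- `(ε_W, δ_W)` is an adjunction on `[a,b]^n` iff `W` is doubly-0-astic. -/
theorem stmt4 (n : ℕ) (hn : 0 < n) (a b : ℝ) (ha : 0 ≤ a) (hab : a < b)
    (W : Fin n → Fin n → EReal) :
    ((∀ x : Fin n → ℝ, (∀ i, x i ∈ Set.Icc a b) →
        ∀ i, deltaE W x i ∈ Set.Icc (a : EReal) (b : EReal)) ∧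
      (∀ y : Fin n → ℝ, (∀ i, y i ∈ Set.Icc a b) →
        ∀ i, epsE W y i ∈ Set.Icc (a : EReal) (b : EReal)) ∧
      (∀ x y : Fin n → ℝ, (∀ i, x i ∈ Set.Icc a b) → (∀ i, y i ∈ Set.Icc a b) →
        ((∀ i, deltaE W x i ≤ (y i : EReal)) ↔ (∀ i, (x i : EReal) ≤ epsE W y i))))
    ↔ DoublyAstic W :=
  stmt4_general n a b hab W
end

section
/- For any doubly-0-astic n×n max-plus matrix W, the equivalence class C_W = {M doubly-0-astic : δ_M = δ_W on [a,b]^n} is closed under entrywise supremum and entrywise infimum; it is a complete lattice whose greatest element is W ∨ I_{a-b} and whose least element is the matrix W̲ with w̲_ij = w_ij if w_ij > a − b and w̲_ij = −∞ otherwise. -/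
section SupFibre

variable {α ι : Type*}

theorem eq_of_sup_eq_sup_of_lt [LinearOrder α] {x w c : α} (hc : c < w) (h : x ⊔ c = w ⊔ c) :
    x = w := by
  rw [sup_eq_left.2 hc.le] at h
  rcases le_total x c with hxc | hcx
  · rw [sup_eq_right.2 hxc] at h
    exact absurd h hc.ne
  · rwa [sup_eq_left.2 hcx] at h

theorem iSup_eq_of_sup_eq_sup [CompleteLinearOrder α] [Nonempty ι] {f g : ι → α} {c t : α}
    (hc : c < t) (h : ∀ j, f j ⊔ c = g j ⊔ c) (hg : ⨆ j, g j = t) : ⨆ j, f j = t := by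
  refine eq_of_sup_eq_sup_of_lt hc ?_
  rw [iSup_sup, iSup_congr h, ← iSup_sup, hg]

theorem sup_sup_eq_of_sup_eq [SemilatticeSup α] {x y c d : α} (hx : x ⊔ c = d) (hy : y ⊔ c = d) :
    x ⊔ y ⊔ c = d := by
  rw [sup_sup_distrib_right, hx, hy, sup_idem]

theorem inf_sup_eq_of_sup_eq [DistribLattice α] {x y c d : α} (hx : x ⊔ c = d) (hy : y ⊔ c = d) :
    x ⊓ y ⊔ c = d := by
  rw [sup_inf_right, hx, hy, inf_idem]

theorem biSup_sup_eq_of_forall [CompleteLattice α] {S : Set ι} {f : ι → α} {c d : α}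
    (hS : S.Nonempty) (h : ∀ M ∈ S, f M ⊔ c = d) : (⨆ M ∈ S, f M) ⊔ c = d := by
  rw [biSup_sup hS, iSup_congr fun M => iSup_congr (h M), biSup_const hS]

theorem biInf_sup_eq_of_forall [Order.Coframe α] {S : Set ι} {f : ι → α} {c d : α}
    (hS : S.Nonempty) (h : ∀ M ∈ S, f M ⊔ c = d) : (⨅ M ∈ S, f M) ⊔ c = d := by
  rw [iInf₂_sup_eq, iInf_congr fun M => iInf_congr (h M), biInf_const hS]

theorem ite_lt_sup_eq [LinearOrder α] [OrderBot α] (c w : α) :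
    (if c < w then w else ⊥) ⊔ c = w ⊔ c := by
  split_ifs with hcw
  · rfl
  · rw [bot_sup_eq, sup_eq_right.2 (not_lt.1 hcw)]

theorem ite_lt_le_of_sup_eq_sup [LinearOrder α] [OrderBot α] {x w c : α}
    (h : x ⊔ c = w ⊔ c) : (if c < w then w else ⊥) ≤ x := by
  split_ifs with hcw
  · exact (eq_of_sup_eq_sup_of_lt hcw h).ge
  · exact bot_le

end SupFibre

section MaxPlus

variable {n : ℕ} {a b : ℝ} {M W : Fin n → Fin n → EReal}

theorem RowAstic.le_zero (hM : RowAstic M) (i j : Fin n) : M i j ≤ 0 :=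
  (le_iSup _ j).trans_eq (hM i)

theorem RowAstic.exists_eq_zero (hM : RowAstic M) (i : Fin n) : ∃ j, M i j = 0 := by
  have : Nonempty (Fin n) := ⟨i⟩
  obtain ⟨j, hj⟩ := exists_eq_ciSup_of_finite (f := M i)
  exact ⟨j, hj.trans (hM i)⟩

theorem RowAstic.le_deltaE (hM : RowAstic M) {x : Fin n → ℝ} (hx : ∀ j, a ≤ x j) (i : Fin n) :
    (a : EReal) ≤ deltaE M x i := by
  obtain ⟨j, hj⟩ := hM.exists_eq_zero i
  calc (a : EReal) ≤ x j := EReal.coe_le_coe_iff.2 (hx j)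
    _ = M i j + x j := by rw [hj, zero_add]
    _ ≤ deltaE M x i := le_iSup (fun j => M i j + (x j : EReal)) j

theorem RowAstic.deltaE_eq_iSup_sup (hM : RowAstic M) {x : Fin n → ℝ}
    (hx : ∀ j, x j ∈ Set.Icc a b) (i : Fin n) :
    deltaE M x i = ⨆ j, (M i j ⊔ ((a - b : ℝ) : EReal)) + x j := by
  refine le_antisymm (iSup_mono fun j => add_le_add_left le_sup_left _) (iSup_le fun j => ?_)
  rw [← max_add_add_right]
  refine sup_le (le_iSup (fun j => M i j + (x j : EReal)) j)
    (le_trans ?_ (hM.le_deltaE (fun j => (hx j).1) i))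
  rw [← EReal.coe_add]
  exact EReal.coe_le_coe_iff.2 (by linarith [(hx j).2])

theorem update_const_mem_Icc (hab : a ≤ b) (j k : Fin n) :
    Function.update (fun _ => a) j b k ∈ Set.Icc a b := by
  rcases eq_or_ne k j with rfl | hk
  · simp [hab]
  · simp [hk, hab]

theorem RowAstic.deltaE_update (hab : a ≤ b) (hM : RowAstic M) (i j : Fin n) :
    deltaE M (Function.update (fun _ => a) j b) i = (M i j ⊔ ((a - b : ℝ) : EReal)) + b := by
  rw [hM.deltaE_eq_iSup_sup (update_const_mem_Icc hab j)]
  refine le_antisymm (iSup_le fun k => ?_) (le_iSup_of_le j (by simp))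
  rcases eq_or_ne k j with rfl | hk
  · simp
  · have hc : ((a - b : ℝ) : EReal) ≤ 0 := by exact_mod_cast sub_nonpos.2 hab
    calc (M i k ⊔ ((a - b : ℝ) : EReal)) + (Function.update (fun _ => a) j b k : ℝ)
        ≤ 0 + (a : EReal) := by
          rw [Function.update_of_ne hk]
          exact add_le_add_left (sup_le (hM.le_zero i k) hc) _
      _ = ((a - b : ℝ) : EReal) + b := by rw [zero_add, ← EReal.coe_add, sub_add_cancel]
      _ ≤ (M i j ⊔ ((a - b : ℝ) : EReal)) + b := add_le_add_left le_sup_right _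

theorem deltaE_eqOn_Icc_iff (hab : a ≤ b) (hM : RowAstic M) (hW : RowAstic W) :
    (∀ x : Fin n → ℝ, (∀ i, x i ∈ Set.Icc a b) → ∀ i, deltaE M x i = deltaE W x i) ↔
      ∀ i j, M i j ⊔ ((a - b : ℝ) : EReal) = W i j ⊔ ((a - b : ℝ) : EReal) := by
  refine ⟨fun h i j => ?_, fun h x hx i => ?_⟩
  · have hij := h _ (update_const_mem_Icc hab j) i
    rw [hM.deltaE_update hab, hW.deltaE_update hab] at hij
    rw [← EReal.add_sub_cancel_right (a := M i j ⊔ _) (b := b), hij, EReal.add_sub_cancel_right]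
  · simp only [hM.deltaE_eq_iSup_sup hx, hW.deltaE_eq_iSup_sup hx, h i]

theorem DoublyAstic.of_sup_eq_sup {c : EReal} (hc : c < 0) (hW : DoublyAstic W)
    (h : ∀ i j, M i j ⊔ c = W i j ⊔ c) : DoublyAstic M := by
  refine ⟨fun i => ?_, fun j => ?_⟩
  · have : Nonempty (Fin n) := ⟨i⟩
    exact iSup_eq_of_sup_eq_sup hc (h i) (hW.1 i)
  · have : Nonempty (Fin n) := ⟨j⟩
    exact iSup_eq_of_sup_eq_sup hc (fun i => h i j) (hW.2 j)

theorem doublyAstic_and_deltaE_eqOn_Icc_iff (hab : a < b) (hW : DoublyAstic W) :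
    (DoublyAstic M ∧
        ∀ x : Fin n → ℝ, (∀ i, x i ∈ Set.Icc a b) → ∀ i, deltaE M x i = deltaE W x i) ↔
      ∀ i j, M i j ⊔ ((a - b : ℝ) : EReal) = W i j ⊔ ((a - b : ℝ) : EReal) := by
  have hc : ((a - b : ℝ) : EReal) < 0 := by exact_mod_cast sub_neg.2 hab
  refine ⟨fun ⟨hM, h⟩ => (deltaE_eqOn_Icc_iff hab.le hM.1 hW.1).1 h, fun h => ?_⟩
  have hM := hW.of_sup_eq_sup hc h
  exact ⟨hM, (deltaE_eqOn_Icc_iff hab.le hM.1 hW.1).2 h⟩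

end MaxPlus

theorem stmt10_general (n : ℕ) (a b : ℝ) (hab : a < b)
    (W : Fin n → Fin n → EReal) (hW : DoublyAstic W)
    (CW : Set (Fin n → Fin n → EReal))
    (hCW : CW = {M | DoublyAstic M ∧
      ∀ x : Fin n → ℝ, (∀ i, x i ∈ Set.Icc a b) → ∀ i, deltaE M x i = deltaE W x i}) :
    (∀ A ∈ CW, ∀ B ∈ CW, (fun i j => A i j ⊔ B i j) ∈ CW ∧ (fun i j => A i j ⊓ B i j) ∈ CW) ∧
    (∀ S : Set (Fin n → Fin n → EReal), S ⊆ CW → S.Nonempty →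
      (fun i j => ⨆ M ∈ S, M i j) ∈ CW ∧ (fun i j => ⨅ M ∈ S, M i j) ∈ CW) ∧
    ((fun i j => W i j ⊔ ((a - b : ℝ) : EReal)) ∈ CW ∧
      ∀ M ∈ CW, ∀ i j, M i j ≤ W i j ⊔ ((a - b : ℝ) : EReal)) ∧
    ((fun i j => if ((a - b : ℝ) : EReal) < W i j then W i j else (⊥ : EReal)) ∈ CW ∧
      ∀ M ∈ CW, ∀ i j,
        (if ((a - b : ℝ) : EReal) < W i j then W i j else (⊥ : EReal)) ≤ M i j) := by
  have hmem : ∀ M, M ∈ CW ↔ ∀ i j, M i j ⊔ ((a - b : ℝ) : EReal) = W i j ⊔ ((a - b : ℝ) : EReal) :=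
    fun M => by rw [hCW]; exact doublyAstic_and_deltaE_eqOn_Icc_iff hab hW
  simp only [hmem]
  refine ⟨fun A hA B hB => ⟨fun i j => sup_sup_eq_of_sup_eq (hA i j) (hB i j),
      fun i j => inf_sup_eq_of_sup_eq (hA i j) (hB i j)⟩,
    fun S hS hne => ⟨fun i j => biSup_sup_eq_of_forall hne fun M hM => (hmem M).1 (hS hM) i j,
      fun i j => biInf_sup_eq_of_forall hne fun M hM => (hmem M).1 (hS hM) i j⟩,
    ⟨fun i j => by rw [sup_assoc, sup_idem], fun M hM i j => le_sup_left.trans_eq (hM i j)⟩,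
    ⟨fun i j => ite_lt_sup_eq _ _, fun M hM i j => ite_lt_le_of_sup_eq_sup (hM i j)⟩⟩

/-- the equivalence class `C_W` of doubly-0-astic matrices inducing the same
dilation as `W` on `[a,b]^n` is closed under entrywise suprema and infima (including nonempty
families), has greatest element `W ∨ I_{a-b}` and least element `W̲`. -/
theorem stmt10 (n : ℕ) (hn : 0 < n) (a b : ℝ) (ha : 0 ≤ a) (hab : a < b)
    (W : Fin n → Fin n → EReal) (hW : DoublyAstic W)
    (CW : Set (Fin n → Fin n → EReal))
    (hCW : CW = {M | DoublyAstic M ∧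
      ∀ x : Fin n → ℝ, (∀ i, x i ∈ Set.Icc a b) → ∀ i, deltaE M x i = deltaE W x i}) :
    (∀ A ∈ CW, ∀ B ∈ CW, (fun i j => A i j ⊔ B i j) ∈ CW ∧ (fun i j => A i j ⊓ B i j) ∈ CW) ∧
    (∀ S : Set (Fin n → Fin n → EReal), S ⊆ CW → S.Nonempty →
      (fun i j => ⨆ M ∈ S, M i j) ∈ CW ∧ (fun i j => ⨅ M ∈ S, M i j) ∈ CW) ∧
    ((fun i j => W i j ⊔ ((a - b : ℝ) : EReal)) ∈ CW ∧
      ∀ M ∈ CW, ∀ i j, M i j ≤ W i j ⊔ ((a - b : ℝ) : EReal)) ∧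
    ((fun i j => if ((a - b : ℝ) : EReal) < W i j then W i j else (⊥ : EReal)) ∈ CW ∧
      ∀ M ∈ CW, ∀ i j,
        (if ((a - b : ℝ) : EReal) < W i j then W i j else (⊥ : EReal)) ≤ M i j) :=
  stmt10_general n a b hab W hW CW hCW
end
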